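/- Let K ≥ 1, α_j > 0, O_{ij} ≥ 0 for j = 1,…,K, and define O_i = Σ_j O_{ij}, A = Σ_j α_j. Let T_{ij} be reals with T_i = Σ_j T_{ij}, T̂_i = Σ_j |T_{ij}|, and assume O_i + A + T_i > 0. Define φ^old_{ij} = (O_{ij}+α_j)/(O_i+A) and φ^new_{ij} = (O_{ij}+α_j+T_{ij})/(O_i+A+T_i), assuming all numerators are nonnegative. Then Σ_j |φ^new_{ij} − φ^old_{ij}| ≤ (|r_i| + r̂_i)/(1+r_i), where r_i = T_i/(O_i+A) and r̂_i = T̂_i/(O_i+A). -/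

import Mathlib

theorem stmt_2 (K : ℕ) (hK : 1 ≤ K) (α Oij Tij : Fin K → ℝ)
    (hα : ∀ j, 0 < α j) (hOij : ∀ j, 0 ≤ Oij j)
    (Oi A Ti Thati : ℝ)
    (hOi : Oi = ∑ j, Oij j) (hA : A = ∑ j, α j)
    (hTi : Ti = ∑ j, Tij j) (hThati : Thati = ∑ j, |Tij j|)
    (hpos : 0 < Oi + A + Ti)
    (hnum : ∀ j, 0 ≤ Oij j + α j + Tij j)
    (φold φnew : Fin K → ℝ)
    (hold : ∀ j, φold j = (Oij j + α j) / (Oi + A))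
    (hnew : ∀ j, φnew j = (Oij j + α j + Tij j) / (Oi + A + Ti))
    (ri rhi : ℝ) (hri : ri = Ti / (Oi + A)) (hrhi : rhi = Thati / (Oi + A)) :
    ∑ j, |φnew j - φold j| ≤ (|ri| + rhi) / (1 + ri) := by
  have hne : Nonempty (Fin K) := ⟨⟨0, hK⟩⟩
  have hD : 0 < Oi + A := by
    have h1 : 0 ≤ Oi := hOi ▸ Finset.sum_nonneg fun j _ => hOij j
    have h2 : 0 < A := hA ▸ Finset.sum_pos (fun j _ => hα j) Finset.univ_nonempty
    linarith
  set D := Oi + A with hDdef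
  have hD' : D ≠ 0 := ne_of_gt hD
  have hDT : 0 < D + Ti := by linarith [hpos]
  have hDT' : D + Ti ≠ 0 := ne_of_gt hDT
  have hrhs : (|ri| + rhi) / (1 + ri) = (|Ti| + Thati) / (D + Ti) := by
    have hriabs : |ri| = |Ti| / D := by rw [hri, abs_div, abs_of_pos hD]
    have h1 : 1 + ri = (D + Ti) / D := by rw [hri, add_div, div_self hD']
    rw [hriabs, hrhi, h1]
    rw [← add_div, div_div_div_comm, div_self hD', div_one]
  rw [hrhs]
  have key : ∀ j, |φnew j - φold j| ≤ (D * |Tij j| + |Ti| * (Oij j + α j)) / (D * (D + Ti)) := by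
    intro j
    have hdiff : φnew j - φold j = (D * Tij j - Ti * (Oij j + α j)) / (D * (D + Ti)) := by
      rw [hnew, hold]
      field_simp
      ring
    rw [hdiff, abs_div, abs_of_pos (mul_pos hD hDT)]
    refine (div_le_div_iff_of_pos_right (mul_pos hD hDT)).mpr ?_
    calc |D * Tij j - Ti * (Oij j + α j)| ≤ |D * Tij j| + |Ti * (Oij j + α j)| := abs_sub _ _
      _ = D * |Tij j| + |Ti| * (Oij j + α j) := by
          rw [abs_mul, abs_mul, abs_of_pos hD, abs_of_nonneg (show (0:ℝ) ≤ Oij j + α j by linarith [hOij j, hα j])]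
  calc ∑ j, |φnew j - φold j| ≤ ∑ j, (D * |Tij j| + |Ti| * (Oij j + α j)) / (D * (D + Ti)) :=
        Finset.sum_le_sum fun j _ => key j
    _ = (D * Thati + |Ti| * D) / (D * (D + Ti)) := by
        rw [← Finset.sum_div]
        congr 1
        rw [Finset.sum_add_distrib, ← Finset.mul_sum, ← Finset.mul_sum, ← hThati]
        congr 1
        rw [Finset.sum_add_distrib, ← hOi, ← hA, hDdef]
    _ = (|Ti| + Thati) / (D + Ti) := by
        rw [div_eq_div_iff (by positivity) hDT']
        ring
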